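/- arXiv:1907.05064 — 2 statements merged into one kernel-verified Lean document; each statement's English description precedes it below -/
import Mathlib

section
/- Let T : [0,1] → ℝ be the Takagi (Blancmange) function T(x) = ∑_{i=0}^{∞} 2^{−i} · s(2^i x), where s(x) is the distance from x to the nearest integer. Define c : ℕ → ℕ by c(1) = 0, c(2n) = 2·c(n), c(2n+1) = c(n+1) + c(n) + 1, and let k_n = ⌈log₂ n⌉. Then for every n ≥ 1, c(n) = 2^{k_n − 1} · T(n / 2^{k_n − 1} − 1). -/
/-!
Writing `n = 2 ^ e + j` with `0 ≤ j ≤ 2 ^ e`, the claim reads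
`c (2 ^ e + j) = 2 ^ e * T (j / 2 ^ e)`, and we prove it by induction on `e`. The even recurrence
just changes the dyadic scale. The odd one is the midpoint identity
`T ((a + b) / 2) = (T a + T b) / 2 + (b - a) / 2` on the dyadic intervals
`[j / 2 ^ r, (j + 1) / 2 ^ r]`: it holds on `[0, 1]`, and passes from level `r` to level `r + 1`
because `T (y / 2) = y / 2 + T y / 2` on `[0, 1]` (left half) and `T (1 - x) = T x` (right half).
-/

/-- The distance from a real number to the nearest integer. -/
noncomputable def nearestIntDist (x : ℝ) : ℝ := ⨅ z : ℤ, |x - (z : ℝ)|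

/-- The Takagi (Blancmange) function. -/
noncomputable def takagi (x : ℝ) : ℝ := ∑' i : ℕ, nearestIntDist (2 ^ i * x) / 2 ^ i

theorem nearestIntDist_eq_abs_sub_round (x : ℝ) : nearestIntDist x = |x - round x| :=
  le_antisymm (ciInf_le ⟨0, by rintro _ ⟨z, rfl⟩; positivity⟩ (round x))
    (le_ciInf (round_le x))

theorem nearestIntDist_nonneg (x : ℝ) : 0 ≤ nearestIntDist x := by
  rw [nearestIntDist_eq_abs_sub_round]
  exact abs_nonneg _

theorem nearestIntDist_le_half (x : ℝ) : nearestIntDist x ≤ 1 / 2 := by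
  rw [nearestIntDist_eq_abs_sub_round]
  exact abs_sub_round x

theorem nearestIntDist_add_intCast (x : ℝ) (z : ℤ) :
    nearestIntDist (x + z) = nearestIntDist x := by
  simp only [nearestIntDist_eq_abs_sub_round, round_add_intCast, Int.cast_add,
    add_sub_add_right_eq_sub]

theorem nearestIntDist_neg (x : ℝ) : nearestIntDist (-x) = nearestIntDist x := by
  simp only [nearestIntDist]
  rw [← (Equiv.neg ℤ).iInf_comp]
  refine iInf_congr fun z ↦ ?_
  rw [Equiv.neg_apply, Int.cast_neg, ← abs_neg]
  ring_nf

theorem nearestIntDist_zero : nearestIntDist 0 = 0 := by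
  simp [nearestIntDist_eq_abs_sub_round]

theorem nearestIntDist_of_nonneg_of_le_half {x : ℝ} (h0 : 0 ≤ x) (h1 : x ≤ 1 / 2) :
    nearestIntDist x = x := by
  rw [nearestIntDist_eq_abs_sub_round, abs_sub_round_eq_min,
    Int.fract_eq_self.2 ⟨h0, by linarith⟩]
  exact min_eq_left (by linarith)

theorem summable_takagi (x : ℝ) : Summable fun i : ℕ ↦ nearestIntDist (2 ^ i * x) / 2 ^ i :=
  (summable_geometric_two' 1).of_nonneg_of_le
    (fun i ↦ div_nonneg (nearestIntDist_nonneg _) (by positivity))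
    (fun i ↦ div_le_div_of_nonneg_right (nearestIntDist_le_half _) (by positivity))

theorem takagi_eq_add_takagi_two_mul (x : ℝ) :
    takagi x = nearestIntDist x + takagi (2 * x) / 2 := by
  rw [takagi, (summable_takagi x).tsum_eq_zero_add, takagi, ← tsum_div_const]
  refine congrArg₂ _ (by simp) (tsum_congr fun i ↦ ?_)
  rw [pow_succ, mul_assoc, div_div]

theorem takagi_add_intCast (x : ℝ) (z : ℤ) : takagi (x + z) = takagi x := by
  simp only [takagi, mul_add]
  congr! 3 with i
  exact_mod_cast nearestIntDist_add_intCast _ (2 ^ i * z)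

theorem takagi_neg (x : ℝ) : takagi (-x) = takagi x := by
  simp only [takagi, mul_neg, nearestIntDist_neg]

theorem takagi_one_sub (x : ℝ) : takagi (1 - x) = takagi x := by
  rw [sub_eq_neg_add, ← Int.cast_one, takagi_add_intCast, takagi_neg]

theorem takagi_zero : takagi 0 = 0 := by
  simp [takagi, nearestIntDist_zero]

theorem takagi_one : takagi 1 = 0 := by
  rw [← sub_zero 1, takagi_one_sub, takagi_zero]

theorem takagi_div_two {y : ℝ} (h0 : 0 ≤ y) (h1 : y ≤ 1) :
    takagi (y / 2) = y / 2 + takagi y / 2 := by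
  rw [takagi_eq_add_takagi_two_mul, mul_div_cancel₀ y two_ne_zero,
    nearestIntDist_of_nonneg_of_le_half (by positivity) (by linarith)]

theorem takagi_midpoint_div_two {a b : ℝ} (ha : 0 ≤ a) (hb : b ≤ 1) (hab : a ≤ b)
    (h : takagi ((a + b) / 2) = (takagi a + takagi b) / 2 + (b - a) / 2) :
    takagi ((a / 2 + b / 2) / 2) =
      (takagi (a / 2) + takagi (b / 2)) / 2 + (b / 2 - a / 2) / 2 := by
  rw [show (a / 2 + b / 2) / 2 = (a + b) / 2 / 2 by ring, takagi_div_two (by linarith) (by linarith),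
    takagi_div_two ha (by linarith), takagi_div_two (by linarith) hb, h]
  ring

theorem takagi_midpoint_dyadic (r j : ℕ) (hj : j < 2 ^ r) :
    takagi ((j / 2 ^ r + (j + 1) / 2 ^ r) / 2) =
      (takagi (j / 2 ^ r) + takagi ((j + 1) / 2 ^ r)) / 2 + ((j + 1) / 2 ^ r - j / 2 ^ r) / 2 := by
  induction r generalizing j with
  | zero =>
    obtain rfl : j = 0 := by simpa using hj
    have := takagi_div_two zero_le_one le_rfl
    norm_num [takagi_zero, takagi_one] at this ⊢
    linarith
  | succ r ih =>
    have left_half : ∀ j : ℕ, j < 2 ^ r →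
        takagi ((j / 2 ^ (r + 1) + (j + 1) / 2 ^ (r + 1)) / 2) =
          (takagi (j / 2 ^ (r + 1)) + takagi ((j + 1) / 2 ^ (r + 1))) / 2 +
            ((j + 1) / 2 ^ (r + 1) - j / 2 ^ (r + 1)) / 2 := by
      intro j hj
      have hj' : (j + 1 : ℝ) ≤ 2 ^ r := by exact_mod_cast Nat.succ_le_of_lt hj
      simp only [pow_succ, ← div_div]
      exact takagi_midpoint_div_two (by positivity) ((div_le_one (by positivity)).2 hj')
        (by gcongr; linarith) (ih j hj)
    rcases lt_or_ge j (2 ^ r) with hjr | hjr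
    · exact left_half j hjr
    obtain ⟨k, hk, rfl⟩ : ∃ k < 2 ^ r, j = 2 ^ (r + 1) - 1 - k :=
      ⟨2 ^ (r + 1) - 1 - j, by omega, by omega⟩
    have hcast : ((2 ^ (r + 1) - 1 - k : ℕ) : ℝ) = 2 ^ (r + 1) - 1 - k := by
      rw [Nat.cast_sub (by omega), Nat.cast_sub Nat.one_le_two_pow]
      push_cast; ring
    rw [hcast, show ((2 : ℝ) ^ (r + 1) - 1 - k) / 2 ^ (r + 1) = 1 - (k + 1) / 2 ^ (r + 1) by
        field_simp; ring,
      show ((2 : ℝ) ^ (r + 1) - 1 - k + 1) / 2 ^ (r + 1) = 1 - k / 2 ^ (r + 1) by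
        field_simp; ring,
      show (1 - ((k : ℝ) + 1) / 2 ^ (r + 1) + (1 - k / 2 ^ (r + 1))) / 2 =
        1 - ((k : ℝ) / 2 ^ (r + 1) + (k + 1) / 2 ^ (r + 1)) / 2 by ring]
    simp only [takagi_one_sub, left_half k hk]
    ring

theorem two_pow_succ_mul_takagi_odd_div (e j : ℕ) (hj : j < 2 ^ e) :
    2 ^ (e + 1) * takagi ((2 * j + 1) / 2 ^ (e + 1)) =
      2 ^ e * takagi (j / 2 ^ e) + 2 ^ e * takagi ((j + 1) / 2 ^ e) + 1 := by
  have h := takagi_midpoint_dyadic e j hj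
  rw [show ((j : ℝ) / 2 ^ e + (j + 1) / 2 ^ e) / 2 = (2 * j + 1) / 2 ^ (e + 1) by
      rw [pow_succ]; ring,
    show (((j : ℝ) + 1) / 2 ^ e - j / 2 ^ e) / 2 = 1 / 2 ^ (e + 1) by rw [pow_succ]; ring] at h
  rw [h, pow_succ]
  field_simp

theorem eq_two_pow_mul_takagi_of_colless_rec {c : ℕ → ℕ} (h1 : c 1 = 0)
    (heven : ∀ n : ℕ, 1 ≤ n → c (2 * n) = 2 * c n)
    (hodd : ∀ n : ℕ, 1 ≤ n → c (2 * n + 1) = c (n + 1) + c n + 1) (e n : ℕ)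
    (hn₁ : 2 ^ e ≤ n) (hn₂ : n ≤ 2 ^ (e + 1)) :
    (c n : ℝ) = 2 ^ e * takagi (n / 2 ^ e - 1) := by
  induction e generalizing n with
  | zero =>
    obtain rfl | rfl : n = 1 ∨ n = 2 := by omega
    · simp [h1, takagi_zero]
    · rw [heven 1 le_rfl, h1]
      norm_num [takagi_one]
  | succ e ih =>
    have hpos : 1 ≤ 2 ^ e := Nat.one_le_two_pow
    rw [pow_succ] at hn₁
    rw [show 2 ^ (e + 1 + 1) = 2 * (2 * 2 ^ e) by ring] at hn₂
    have hpow : (2 : ℝ) ^ (e + 1) = 2 ^ e * 2 := pow_succ 2 e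
    obtain ⟨m, rfl | rfl⟩ := Nat.even_or_odd' n
    · rw [heven m (by omega), Nat.cast_mul, ih m (by omega) (by omega), hpow]
      push_cast
      rw [show (2 * m : ℝ) / (2 ^ e * 2) = m / 2 ^ e by field_simp]
      ring
    · obtain ⟨j, rfl⟩ : ∃ j, m = 2 ^ e + j := ⟨m - 2 ^ e, by omega⟩
      rw [hodd _ (by omega), Nat.cast_add, Nat.cast_add, ih _ (by omega) (by omega),
        ih _ (by omega) (by omega),
        show ((2 ^ e + j + 1 : ℕ) : ℝ) / 2 ^ e - 1 = (j + 1) / 2 ^ e by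
          push_cast; field_simp; ring,
        show ((2 ^ e + j : ℕ) : ℝ) / 2 ^ e - 1 = j / 2 ^ e by push_cast; field_simp; ring,
        show ((2 * (2 ^ e + j) + 1 : ℕ) : ℝ) / 2 ^ (e + 1) - 1 = (2 * j + 1) / 2 ^ (e + 1) by
          push_cast; rw [hpow]; field_simp; ring,
        two_pow_succ_mul_takagi_odd_div e j (by omega)]
      push_cast
      ring

theorem Nat.pow_pred_clog_le_self {b n : ℕ} (hb : 1 < b) (hn : 1 ≤ n) :
    b ^ (Nat.clog b n - 1) ≤ n := by
  rcases hn.eq_or_lt with rfl | hn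
  · simp
  · exact (Nat.pow_pred_clog_lt_self hb hn).le

theorem Nat.le_pow_pred_clog_succ {b : ℕ} (hb : 1 < b) (n : ℕ) :
    n ≤ b ^ (Nat.clog b n - 1 + 1) :=
  (Nat.le_pow_clog hb n).trans (Nat.pow_le_pow_right (by omega) (by omega))

theorem minColless_takagi (c : ℕ → ℕ) (h1 : c 1 = 0)
    (heven : ∀ n : ℕ, 1 ≤ n → c (2 * n) = 2 * c n)
    (hodd : ∀ n : ℕ, 1 ≤ n → c (2 * n + 1) = c (n + 1) + c n + 1) :
    ∀ n : ℕ, 1 ≤ n →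
      (c n : ℝ) =
        2 ^ (Nat.clog 2 n - 1) * takagi ((n : ℝ) / 2 ^ (Nat.clog 2 n - 1) - 1) :=
  fun n hn ↦ eq_two_pow_mul_takagi_of_colless_rec h1 heven hodd _ n
    (Nat.pow_pred_clog_le_self one_lt_two hn) (Nat.le_pow_pred_clog_succ one_lt_two n)
end

section
/- Define c : ℕ → ℕ by c(1) = 0, c(2n) = 2·c(n), c(2n+1) = c(n+1) + c(n) + 1. Let s = 2^{j+1} − (2t+1) be odd, with j = ⌊log₂ s⌋ and 0 ≤ t < 2^{j−1}. Then for every m ≥ 1, c(2m+s) + c(2m) + s = c(4m+s) holds if and only if m = 2^j·p for some p ≥ 1. -/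
/-!
Let `D(n, w) = c(n + w) + c(n) + w - c(2n + w)` be the excess of the split `2n + w = (n + w) + n`.
The recurrence expresses `D` at `(2a, 2b)`, `(2a, 2b + 1)`, `(2a + 1, 2b + 2)`, `(2a + 1, 2b + 1)` as
`2 D(a, b)`, `D(a, b + 1) + D(a, b)`, `D(a, b + 2) + D(a + 1, b) + 2` and `D(a, b + 1) + D(a + 1, b)`.
Together with the base case `n = 1`, where `D(1, w) > 0` for `w ≥ 2` by the slope bound
`c(m + 1) + 2 ≤ c(m) + m` (`m ≥ 3`), an induction on `n` shows `D ≥ 0` and that `D(n, w) = 0` exactly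
when `M = 2 ^ ⌈log₂ w⌉` satisfies `M ≤ n` and `M ∣ n ∨ M ∣ n + w`. For `n = 2m` and `w = s = 2b + 1`
this reads `2 ^ j ≤ m ∧ 2 ^ j ∣ m`, since `⌈log₂ (b + 1)⌉ = ⌊log₂ s⌋ = j`.
-/

open Nat

theorem Nat.clog_two_two_mul {b : ℕ} (hb : 1 ≤ b) : clog 2 (2 * b) = clog 2 b + 1 := by
  rw [clog_of_two_le one_lt_two (by omega)]
  congr 2
  omega

theorem Nat.clog_two_two_mul_add_one {b : ℕ} (hb : 1 ≤ b) :
    clog 2 (2 * b + 1) = clog 2 (b + 1) + 1 := by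
  rw [clog_of_two_le one_lt_two (by omega)]
  congr 2
  omega

theorem Nat.two_pow_clog_succ (b : ℕ) :
    2 ^ clog 2 (b + 1) = 2 ^ clog 2 b ∨ (2 ^ clog 2 b = b ∧ 2 ^ clog 2 (b + 1) = 2 * b) := by
  by_cases hb : 2 ^ clog 2 b = b
  · have hlt := (clog_lt_clog_succ_iff one_lt_two).2 hb
    have hle : clog 2 (b + 1) ≤ clog 2 b + 1 := by
      refine clog_le_of_le_pow ?_
      rw [pow_succ, hb]
      have : b ≠ 0 := by rintro rfl; simp at hb
      omega
    refine .inr ⟨hb, ?_⟩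
    rw [show clog 2 (b + 1) = clog 2 b + 1 by omega, pow_succ, hb, mul_comm]
  · left
    rw [← (clog_eq_clog_succ_iff one_lt_two).2 hb]

theorem Nat.log_two_two_mul_add_one (b : ℕ) : log 2 (2 * b + 1) = clog 2 (b + 1) := by
  refine log_eq_of_pow_le_of_lt_pow ?_ ?_
  · rcases b.eq_zero_or_pos with rfl | hb
    · simp
    have := pow_pred_clog_lt_self one_lt_two (show 1 < b + 1 by omega)
    have hpos := clog_pos one_lt_two (show 1 < b + 1 by omega)
    rw [← Nat.succ_pred_eq_of_pos hpos, pow_succ]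
    omega
  · have := le_pow_clog one_lt_two (b + 1)
    rw [pow_succ]
    omega

theorem Nat.pair_induction_on_parity {P : ℕ → ℕ → Prop}
    (zero_right : ∀ n, 1 ≤ n → P n 0) (one_left : ∀ w, P 1 w)
    (even_even : ∀ a b, 1 ≤ a → P a b → P (2 * a) (2 * b))
    (even_odd : ∀ a b, 1 ≤ a → P a (b + 1) → P a b → P (2 * a) (2 * b + 1))
    (odd_even : ∀ a b, 1 ≤ a → P a (b + 2) → P (a + 1) b → P (2 * a + 1) (2 * b + 2))
    (odd_odd : ∀ a b, 1 ≤ a → P a (b + 1) → P (a + 1) b → P (2 * a + 1) (2 * b + 1)) :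
    ∀ n, 1 ≤ n → ∀ w, P n w := by
  intro n
  induction n using Nat.strong_induction_on with
  | _ n ih =>
  intro hn w
  obtain ⟨a, rfl | rfl⟩ := Nat.even_or_odd' n
  · have ha : 1 ≤ a := by omega
    obtain ⟨b, rfl | rfl⟩ := Nat.even_or_odd' w
    · exact even_even a b ha (ih a (by omega) ha b)
    · exact even_odd a b ha (ih a (by omega) ha _) (ih a (by omega) ha b)
  rcases a.eq_zero_or_pos with rfl | ha
  · exact one_left w
  obtain ⟨b, rfl | rfl⟩ := Nat.even_or_odd' w
  · rcases b with _ | b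
    · exact zero_right _ (by omega)
    · exact odd_even a b ha (ih a (by omega) ha _) (ih (a + 1) (by omega) (by omega) b)
  · exact odd_odd a b ha (ih a (by omega) ha _) (ih (a + 1) (by omega) (by omega) b)

theorem Nat.le_and_dvd_iff_exists_mul {M m : ℕ} (hM : 0 < M) :
    M ≤ m ∧ M ∣ m ↔ ∃ p, 1 ≤ p ∧ m = M * p := by
  constructor
  · rintro ⟨hle, p, rfl⟩
    refine ⟨p, Nat.pos_of_ne_zero fun hp => ?_, rfl⟩
    simp only [hp, mul_zero, nonpos_iff_eq_zero] at hle
    omega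
  · rintro ⟨p, hp, rfl⟩
    exact ⟨Nat.le_mul_of_pos_right M hp, dvd_mul_right M p⟩

def AlignedSplit (n w : ℕ) : Prop :=
  2 ^ clog 2 w ≤ n ∧ (2 ^ clog 2 w ∣ n ∨ 2 ^ clog 2 w ∣ n + w)

theorem alignedSplit_zero_right_iff {n : ℕ} : AlignedSplit n 0 ↔ 1 ≤ n := by
  simp [AlignedSplit]

theorem alignedSplit_one_left_iff {w : ℕ} : AlignedSplit 1 w ↔ w ≤ 1 := by
  refine ⟨fun h => ?_, fun hw => ?_⟩
  · by_contra! hw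
    have := Nat.one_lt_two_pow (clog_pos one_lt_two hw).ne'
    exact absurd h.1 (by omega)
  · simp [AlignedSplit, clog_of_right_le_one hw]

theorem alignedSplit_two_mul_two_mul_iff {a b : ℕ} :
    AlignedSplit (2 * a) (2 * b) ↔ AlignedSplit a b := by
  rcases b.eq_zero_or_pos with rfl | hb
  · simp only [mul_zero, alignedSplit_zero_right_iff]
    omega
  simp only [AlignedSplit, clog_two_two_mul hb, pow_succ', ← mul_add,
    Nat.mul_le_mul_left_iff two_pos, Nat.mul_dvd_mul_iff_left two_pos]

theorem alignedSplit_two_mul_two_mul_add_one_iff {a b : ℕ} :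
    AlignedSplit (2 * a) (2 * b + 1) ↔ 2 ^ clog 2 (b + 1) ≤ a ∧ 2 ^ clog 2 (b + 1) ∣ a := by
  rcases b.eq_zero_or_pos with rfl | hb
  · simp [AlignedSplit]
    omega
  have hodd : ¬ 2 * 2 ^ clog 2 (b + 1) ∣ 2 * a + (2 * b + 1) := fun h => by
    have := (Nat.dvd_trans (dvd_mul_right 2 _) h)
    omega
  simp only [AlignedSplit, clog_two_two_mul_add_one hb, pow_succ', hodd, or_false,
    Nat.mul_le_mul_left_iff two_pos, Nat.mul_dvd_mul_iff_left two_pos]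

theorem alignedSplit_two_mul_add_one_two_mul_add_one_iff {a b : ℕ} (ha : 1 ≤ a) :
    AlignedSplit (2 * a + 1) (2 * b + 1) ↔
      2 ^ clog 2 (b + 1) ≤ a ∧ 2 ^ clog 2 (b + 1) ∣ a + b + 1 := by
  rcases b.eq_zero_or_pos with rfl | hb
  · simp [AlignedSplit, ha]
  have hodd : ¬ 2 * 2 ^ clog 2 (b + 1) ∣ 2 * a + 1 := fun h => by
    have := (Nat.dvd_trans (dvd_mul_right 2 _) h)
    omega
  have hle : 2 * 2 ^ clog 2 (b + 1) ≤ 2 * a + 1 ↔ 2 ^ clog 2 (b + 1) ≤ a := by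
    omega
  simp only [AlignedSplit, clog_two_two_mul_add_one hb, pow_succ', hodd, false_or, hle,
    show 2 * a + 1 + (2 * b + 1) = 2 * (a + b + 1) by ring, Nat.mul_dvd_mul_iff_left two_pos]

theorem not_alignedSplit_two_mul_add_one_two_mul_add_two (a b : ℕ) :
    ¬ AlignedSplit (2 * a + 1) (2 * b + 2) := by
  rintro ⟨-, h | h⟩ <;>
  · have := Nat.dvd_trans (dvd_pow_self 2 (clog_pos one_lt_two (by omega)).ne') h
    omega

theorem alignedSplit_succ_and_iff {a b : ℕ} :
    AlignedSplit a (b + 1) ∧ AlignedSplit a b ↔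
      2 ^ clog 2 (b + 1) ≤ a ∧ 2 ^ clog 2 (b + 1) ∣ a := by
  unfold AlignedSplit
  rcases two_pow_clog_succ b with hM | ⟨hN, hM⟩
  · rw [hM]
    refine ⟨?_, fun h => ⟨⟨h.1, .inl h.2⟩, h.1, .inl h.2⟩⟩
    rintro ⟨⟨hle, hsucc⟩, -, h⟩
    refine ⟨hle, hsucc.elim id fun hsucc => ?_⟩
    rcases h with h | h
    · exact h
    · rw [Nat.dvd_one.1 ((Nat.dvd_add_right h).1 hsucc)]
      exact one_dvd a
  · rw [hM, hN]
    refine ⟨?_, fun h => ⟨⟨h.1, .inl h.2⟩, by omega, .inl (Nat.dvd_trans (dvd_mul_left b 2) h.2)⟩⟩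
    rintro ⟨⟨hle, hsucc⟩, -, h⟩
    have hb : b ∣ a := h.elim id Nat.dvd_add_self_right.1
    refine ⟨hle, hsucc.elim id fun hsucc => ?_⟩
    obtain rfl : b = 1 := Nat.dvd_one.1 <|
      (Nat.dvd_add_right (hb.add dvd_rfl)).1 (Nat.dvd_trans (dvd_mul_left b 2) hsucc)
    omega

theorem alignedSplit_succ_and_succ_iff {a b : ℕ} :
    AlignedSplit a (b + 1) ∧ AlignedSplit (a + 1) b ↔
      2 ^ clog 2 (b + 1) ≤ a ∧ 2 ^ clog 2 (b + 1) ∣ a + b + 1 := by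
  unfold AlignedSplit
  rcases two_pow_clog_succ b with hM | ⟨hN, hM⟩
  · rw [hM]
    refine ⟨?_, fun h => ⟨⟨h.1, .inr h.2⟩, by omega, .inr (by rw [add_right_comm]; exact h.2)⟩⟩
    rintro ⟨⟨hle, hsucc⟩, -, h⟩
    refine ⟨hle, hsucc.elim (fun ha => ?_) id⟩
    rcases h with h | h
    · rw [Nat.dvd_one.1 ((Nat.dvd_add_right ha).1 h)]
      exact one_dvd _
    · rwa [add_right_comm] at h
  · rw [hM, hN]
    refine ⟨?_, fun h => ⟨⟨h.1, .inr h.2⟩, by omega,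
      .inr (by rw [add_right_comm]; exact Nat.dvd_trans (dvd_mul_left b 2) h.2)⟩⟩
    rintro ⟨⟨hle, hsucc⟩, -, h⟩
    have hb : b ∣ a + 1 := h.elim id Nat.dvd_add_self_right.1
    refine ⟨hle, hsucc.elim (fun ha => ?_) id⟩
    obtain rfl : b = 1 := Nat.dvd_one.1 <|
      (Nat.dvd_add_right (Nat.dvd_trans (dvd_mul_left b 2) ha)).1 hb
    omega

structure IsMinColless (c : ℕ → ℕ) : Prop where
  one : c 1 = 0
  two_mul : ∀ n, 1 ≤ n → c (2 * n) = 2 * c n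
  two_mul_add_one : ∀ n, 1 ≤ n → c (2 * n + 1) = c (n + 1) + c n + 1

def collessDefect (c : ℕ → ℕ) (n w : ℕ) : ℤ := c (n + w) + c n + w - c (2 * n + w)

theorem collessDefect_eq_zero_iff {c : ℕ → ℕ} {n w : ℕ} :
    collessDefect c n w = 0 ↔ c (n + w) + c n + w = c (2 * n + w) := by
  rw [collessDefect, sub_eq_zero]
  norm_cast

namespace IsMinColless

variable {c : ℕ → ℕ}

theorem two_mul' (hc : IsMinColless c) {k n : ℕ} (hk : k = 2 * n) (hn : 1 ≤ n) :
    c k = 2 * c n :=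
  hk ▸ hc.two_mul n hn

theorem two_mul_add_one' (hc : IsMinColless c) {k n : ℕ} (hk : k = 2 * n + 1)
    (hn : 1 ≤ n) : c k = c (n + 1) + c n + 1 :=
  hk ▸ hc.two_mul_add_one n hn

theorem apply_succ_add_one_le (hc : IsMinColless c) {m : ℕ} (hm : 1 ≤ m) :
    c (m + 1) + 1 ≤ c m + m := by
  induction m using Nat.strong_induction_on with
  | _ m ih =>
  obtain ⟨v, rfl | rfl⟩ := Nat.even_or_odd' m
  · have hv := ih v (by omega) (by omega)
    rw [hc.two_mul_add_one v (by omega), hc.two_mul v (by omega)]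
    omega
  · rcases v.eq_zero_or_pos with rfl | hv
    · simp [hc.two_mul' (show 2 = 2 * 1 from rfl) le_rfl, hc.one]
    have := ih v (by omega) hv
    rw [hc.two_mul' (show 2 * v + 1 + 1 = 2 * (v + 1) by ring) (by omega),
      hc.two_mul_add_one v hv]
    omega

theorem apply_succ_add_two_le (hc : IsMinColless c) {m : ℕ} (hm : 3 ≤ m) :
    c (m + 1) + 2 ≤ c m + m := by
  obtain ⟨v, rfl | rfl⟩ := Nat.even_or_odd' m
  · have := hc.apply_succ_add_one_le (m := v) (by omega)
    rw [hc.two_mul_add_one v (by omega), hc.two_mul v (by omega)]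
    omega
  · have := hc.apply_succ_add_one_le (m := v) (by omega)
    rw [hc.two_mul' (show 2 * v + 1 + 1 = 2 * (v + 1) by ring) (by omega),
      hc.two_mul_add_one v (by omega)]
    omega

theorem defect_zero_right (hc : IsMinColless c) {n : ℕ} (hn : 1 ≤ n) :
    collessDefect c n 0 = 0 := by
  simp [collessDefect, hc.two_mul n hn]
  ring

theorem defect_one_right (hc : IsMinColless c) {n : ℕ} (hn : 1 ≤ n) :
    collessDefect c n 1 = 0 := by
  simp [collessDefect, hc.two_mul_add_one n hn]

theorem defect_one_left_pos (hc : IsMinColless c) {w : ℕ} (hw : 2 ≤ w) :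
    0 < collessDefect c 1 w := by
  have := hc.apply_succ_add_two_le (m := w + 1) (by omega)
  rw [collessDefect, hc.one, show 2 * 1 + w = w + 1 + 1 by ring, add_comm 1 w]
  omega

theorem defect_one_left_eq_zero_iff (hc : IsMinColless c) {w : ℕ} :
    collessDefect c 1 w = 0 ↔ w ≤ 1 := by
  refine ⟨fun h => ?_, fun hw => ?_⟩
  · by_contra! hw
    exact (hc.defect_one_left_pos hw).ne' h
  · interval_cases w
    exacts [hc.defect_zero_right le_rfl, hc.defect_one_right le_rfl]

theorem defect_two_mul_two_mul (hc : IsMinColless c) {a : ℕ} (ha : 1 ≤ a) (b : ℕ) :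
    collessDefect c (2 * a) (2 * b) = 2 * collessDefect c a b := by
  have h₁ := hc.two_mul' (show 2 * a + 2 * b = 2 * (a + b) by ring) (by omega)
  have h₂ := hc.two_mul' (show 2 * (2 * a) + 2 * b = 2 * (2 * a + b) by ring) (by omega)
  simp only [collessDefect]
  rw [h₁, h₂, hc.two_mul a ha]
  push_cast
  ring

theorem defect_two_mul_two_mul_add_one (hc : IsMinColless c) {a : ℕ} (ha : 1 ≤ a) (b : ℕ) :
    collessDefect c (2 * a) (2 * b + 1) = collessDefect c a (b + 1) + collessDefect c a b := by
  have h₁ := hc.two_mul_add_one'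
    (show 2 * a + (2 * b + 1) = 2 * (a + b) + 1 by ring) (by omega)
  have h₂ := hc.two_mul_add_one'
    (show 2 * (2 * a) + (2 * b + 1) = 2 * (2 * a + b) + 1 by ring) (by omega)
  simp only [collessDefect]
  rw [h₁, h₂, hc.two_mul a ha]
  push_cast
  ring_nf

theorem defect_two_mul_add_one_two_mul_add_two (hc : IsMinColless c) {a : ℕ} (ha : 1 ≤ a)
    (b : ℕ) : collessDefect c (2 * a + 1) (2 * b + 2) =
      collessDefect c a (b + 2) + collessDefect c (a + 1) b + 2 := by
  have h₁ := hc.two_mul_add_one'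
    (show 2 * a + 1 + (2 * b + 2) = 2 * (a + b + 1) + 1 by ring) (by omega)
  have h₂ := hc.two_mul'
    (show 2 * (2 * a + 1) + (2 * b + 2) = 2 * (2 * a + b + 2) by ring) (by omega)
  simp only [collessDefect]
  rw [h₁, h₂, hc.two_mul_add_one a ha]
  push_cast
  ring_nf

theorem defect_two_mul_add_one_two_mul_add_one (hc : IsMinColless c) {a : ℕ} (ha : 1 ≤ a)
    (b : ℕ) : collessDefect c (2 * a + 1) (2 * b + 1) =
      collessDefect c a (b + 1) + collessDefect c (a + 1) b := by
  have h₁ := hc.two_mul'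
    (show 2 * a + 1 + (2 * b + 1) = 2 * (a + b + 1) by ring) (by omega)
  have h₂ := hc.two_mul_add_one'
    (show 2 * (2 * a + 1) + (2 * b + 1) = 2 * (2 * a + b + 1) + 1 by ring) (by omega)
  simp only [collessDefect]
  rw [h₁, h₂, hc.two_mul_add_one a ha]
  push_cast
  ring_nf

theorem defect_nonneg (hc : IsMinColless c) {n : ℕ} (hn : 1 ≤ n) (w : ℕ) :
    0 ≤ collessDefect c n w := by
  refine Nat.pair_induction_on_parity (P := fun n w => 0 ≤ collessDefect c n w)
    (fun n hn => (hc.defect_zero_right hn).ge) (fun w => ?_) (fun a b ha h => ?_)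
    (fun a b ha h₁ h₂ => ?_) (fun a b ha h₁ h₂ => ?_) (fun a b ha h₁ h₂ => ?_) n hn w
  · rcases le_or_gt w 1 with hw | hw
    exacts [(hc.defect_one_left_eq_zero_iff.2 hw).ge, (hc.defect_one_left_pos hw).le]
  · rw [hc.defect_two_mul_two_mul ha]
    omega
  · rw [hc.defect_two_mul_two_mul_add_one ha]
    omega
  · rw [hc.defect_two_mul_add_one_two_mul_add_two ha]
    omega
  · rw [hc.defect_two_mul_add_one_two_mul_add_one ha]
    omega

theorem defect_eq_zero_iff (hc : IsMinColless c) {n : ℕ} (hn : 1 ≤ n) (w : ℕ) :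
    collessDefect c n w = 0 ↔ AlignedSplit n w := by
  refine Nat.pair_induction_on_parity (P := fun n w => collessDefect c n w = 0 ↔ AlignedSplit n w)
    (fun n hn => ?_) (fun w => ?_) (fun a b ha h => ?_)
    (fun a b ha h₁ h₂ => ?_) (fun a b ha _ _ => ?_) (fun a b ha h₁ h₂ => ?_) n hn w
  · simp [hc.defect_zero_right hn, alignedSplit_zero_right_iff, hn]
  · rw [hc.defect_one_left_eq_zero_iff, alignedSplit_one_left_iff]
  · rw [hc.defect_two_mul_two_mul ha, alignedSplit_two_mul_two_mul_iff, ← h]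
    omega
  · have := hc.defect_nonneg ha (b + 1)
    have := hc.defect_nonneg ha b
    rw [hc.defect_two_mul_two_mul_add_one ha, alignedSplit_two_mul_two_mul_add_one_iff,
      ← alignedSplit_succ_and_iff, ← h₁, ← h₂]
    omega
  · have := hc.defect_nonneg ha (b + 2)
    have := hc.defect_nonneg (show 1 ≤ a + 1 by omega) b
    simp only [hc.defect_two_mul_add_one_two_mul_add_two ha,
      not_alignedSplit_two_mul_add_one_two_mul_add_two, iff_false]
    omega
  · have := hc.defect_nonneg ha (b + 1)
    have := hc.defect_nonneg (show 1 ≤ a + 1 by omega) b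
    rw [hc.defect_two_mul_add_one_two_mul_add_one ha,
      alignedSplit_two_mul_add_one_two_mul_add_one_iff ha, ← alignedSplit_succ_and_succ_iff,
      ← h₁, ← h₂]
    omega

end IsMinColless

theorem minColless_eq_odd_even_case_general (c : ℕ → ℕ) (h1 : c 1 = 0)
    (heven : ∀ n : ℕ, 1 ≤ n → c (2 * n) = 2 * c n)
    (hodd : ∀ n : ℕ, 1 ≤ n → c (2 * n + 1) = c (n + 1) + c n + 1)
    (s j : ℕ) (hsodd : Odd s) (hj : j = Nat.log 2 s) :
    ∀ m : ℕ, 1 ≤ m →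
      (c (2 * m + s) + c (2 * m) + s = c (4 * m + s) ↔
        ∃ p : ℕ, 1 ≤ p ∧ m = 2 ^ j * p) := by
  intro m hm
  have hc : IsMinColless c := ⟨h1, heven, hodd⟩
  obtain ⟨b, rfl⟩ := hsodd
  rw [hj, Nat.log_two_two_mul_add_one, show 4 * m = 2 * (2 * m) by ring,
    ← collessDefect_eq_zero_iff, hc.defect_eq_zero_iff (by omega),
    alignedSplit_two_mul_two_mul_add_one_iff]
  exact Nat.le_and_dvd_iff_exists_mul (Nat.two_pow_pos _)

theorem minColless_eq_odd_even_case (c : ℕ → ℕ) (h1 : c 1 = 0)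
    (heven : ∀ n : ℕ, 1 ≤ n → c (2 * n) = 2 * c n)
    (hodd : ∀ n : ℕ, 1 ≤ n → c (2 * n + 1) = c (n + 1) + c n + 1)
    (s j t : ℕ) (hsodd : Odd s) (hj : j = Nat.log 2 s)
    (hst : s + (2 * t + 1) = 2 ^ (j + 1)) (ht : t < 2 ^ (j - 1)) :
    ∀ m : ℕ, 1 ≤ m →
      (c (2 * m + s) + c (2 * m) + s = c (4 * m + s) ↔
        ∃ p : ℕ, 1 ≤ p ∧ m = 2 ^ j * p) :=
  minColless_eq_odd_even_case_general c h1 heven hodd s j hsodd hj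
end
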